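/- Let X be a finite group, Y ⊴ X a normal subgroup, and 𝒴 ⊆ Irr(Y) an X-stable subset. If there exists an extension map for 𝒴 with respect to Y ⊴ X, then there exists an X-equivariant extension map for 𝒴 with respect to Y ⊴ X, i.e. a map Λ assigning to each χ ∈ 𝒴 an extension Λ(χ) ∈ Irr(X_χ) of χ such that Λ(χ^x) = Λ(χ)^x for all χ ∈ 𝒴 and x ∈ X. -/

import Mathlib

noncomputable section

open scoped Classical

/-- `χ` is the character of an irreducible complex representation of `G`. -/
def IsIrrChar (G : Type) [Group G] (χ : G → ℂ) : Prop :=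
  ∃ V : FDRep ℂ G, CategoryTheory.Simple V ∧ χ = FDRep.character V

/-- The conjugate `θ^x` of a character `θ` of a normal subgroup `Y` of `X`,
given by `θ^x (y) = θ (x * y * x⁻¹)`. -/
def conjChar {X : Type} [Group X] {Y : Subgroup X} [hY : Y.Normal]
    (θ : ↥Y → ℂ) (x : X) : ↥Y → ℂ :=
  fun y => θ ⟨x * ↑y * x⁻¹, hY.conj_mem ↑y y.2 x⟩

lemma conjChar_one {X : Type} [Group X] {Y : Subgroup X} [Y.Normal] (θ : ↥Y → ℂ) :
    conjChar θ 1 = θ := by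
  funext y; simp only [conjChar]; congr 1; ext; simp

lemma conjChar_mul {X : Type} [Group X] {Y : Subgroup X} [Y.Normal]
    (θ : ↥Y → ℂ) (a b : X) :
    conjChar θ (a * b) = conjChar (conjChar θ a) b := by
  funext y; simp only [conjChar]; congr 1; ext; group

/-- The stabiliser `X_θ` in `X` of a character `θ` of a normal subgroup `Y ⊴ X`. -/
def charStab {X : Type} [Group X] (Y : Subgroup X) [Y.Normal] (θ : ↥Y → ℂ) :
    Subgroup X where
  carrier := {x | conjChar θ x = θ}
  one_mem' := conjChar_one θ
  mul_mem' := by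
    intro a b ha hb
    show conjChar θ (a * b) = θ
    rw [conjChar_mul, show conjChar θ a = θ from ha]
    exact hb
  inv_mem' := by
    intro a ha
    show conjChar θ a⁻¹ = θ
    have h1 : conjChar θ (a * a⁻¹) = conjChar θ a⁻¹ := by
      rw [conjChar_mul, show conjChar θ a = θ from ha]
    have h2 : a * a⁻¹ = 1 := by group
    rw [← h1, h2, conjChar_one]

/-- `Λ` is an extension map for `𝒴 ⊆ Irr(Y)` with respect to `Y ⊴ X`:
for each `χ ∈ 𝒴`, `Λ χ` is an irreducible character of the stabiliser `X_χ`
whose restriction to `Y` is `χ`. -/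
def IsExtensionMapOn {X : Type} [Group X] (Y : Subgroup X) [Y.Normal]
    (𝒴 : Set (↥Y → ℂ)) (Λ : ∀ χ : ↥Y → ℂ, ↥(charStab Y χ) → ℂ) : Prop :=
  ∀ χ ∈ 𝒴, IsIrrChar ↥(charStab Y χ) (Λ χ) ∧
    ∀ (y : X) (hy : y ∈ Y) (hy' : y ∈ charStab Y χ), Λ χ ⟨y, hy'⟩ = χ ⟨y, hy⟩

section Aux

open CategoryTheory

/-- Transfer of simplicity along an equivalence with additive inverse. -/
lemma simple_equiv_obj {C D : Type*} [Category C] [Category D]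
    [Preadditive C] [Preadditive D] (E : C ≌ D) [E.inverse.Additive]
    (A : C) (hA : Simple A) : Simple (E.functor.obj A) := by
  constructor
  intro Z f m
  letI i : E.inverse.obj (E.functor.obj A) ≅ A := E.unitIso.symm.app A
  letI g : E.inverse.obj Z ⟶ A := E.inverse.map f ≫ i.hom
  have hgf : E.inverse.map f = g ≫ i.inv := by simp [g]
  haveI mg : Mono g := mono_comp _ _
  have hiff := hA.mono_isIso_iff_nonzero g
  constructor
  · intro hf h0
    have hg0 : g = 0 := by simp [g, h0]
    haveI : IsIso (E.inverse.map f) := inferInstance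
    have : IsIso g := IsIso.comp_isIso
    exact hiff.mp this hg0
  · intro hf
    have hg0 : g ≠ 0 := by
      intro h0
      apply hf
      apply E.inverse.map_injective
      rw [hgf, h0, Functor.map_zero, Limits.zero_comp]
    haveI : IsIso g := hiff.mpr hg0
    haveI : IsIso (E.inverse.map f) := by rw [hgf]; infer_instance
    exact isIso_of_reflects_iso f E.inverse

/-- The equivalence of `FDRep` categories induced by a `MulEquiv`. -/
noncomputable def resEquiv {G H : Type} [Group G] [Group H] (e : G ≃* H) :
    FDRep ℂ H ≌ FDRep ℂ G :=
  CategoryTheory.Equivalence.mk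
    (Action.res (FGModuleCat ℂ) (e.toMonoidHom))
    (Action.res (FGModuleCat ℂ) (e.symm.toMonoidHom))
    ((Action.resId _).symm ≪≫ eqToIso (by congr 1; ext x; exact (e.apply_symm_apply x).symm) ≪≫
      (Action.resComp (FGModuleCat ℂ)
        (e.symm.toMonoidHom) (e.toMonoidHom)).symm)
    ((Action.resComp (FGModuleCat ℂ)
        (e.toMonoidHom) (e.symm.toMonoidHom)) ≪≫
      eqToIso (by congr 1; ext x; exact e.symm_apply_apply x) ≪≫ (Action.resId _))

lemma isIrrChar_comp {G H : Type} [Group G] [Group H] (e : G ≃* H)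
    {ψ : H → ℂ} (h : IsIrrChar H ψ) : IsIrrChar G (fun g => ψ (e g)) := by
  obtain ⟨V, hs, rfl⟩ := h
  haveI : ((resEquiv e).inverse).Additive :=
    inferInstanceAs (Action.res (FGModuleCat ℂ) (e.symm.toMonoidHom)).Additive
  exact ⟨(resEquiv e).functor.obj V, simple_equiv_obj (resEquiv e) V hs, funext fun g => rfl⟩

lemma isIrrChar_conj_eq {G : Type} [Group G] {ψ : G → ℂ} (h : IsIrrChar G ψ)
    (a b : G) : ψ (a * b * a⁻¹) = ψ b := by
  obtain ⟨V, _, rfl⟩ := h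
  exact FDRep.char_conj V b a

variable {X : Type} [Group X] {Y : Subgroup X} [Y.Normal]

lemma mem_charStab_iff (θ : ↥Y → ℂ) (x g : X) :
    g ∈ charStab Y (conjChar θ x) ↔ x * g * x⁻¹ ∈ charStab Y θ := by
  constructor
  · intro h
    have h1 : conjChar θ (x * g) = conjChar θ x :=
      (conjChar_mul θ x g).trans h
    show conjChar θ (x * g * x⁻¹) = θ
    calc conjChar θ (x * g * x⁻¹) = conjChar (conjChar θ (x * g)) x⁻¹ := conjChar_mul θ (x * g) x⁻¹
      _ = conjChar (conjChar θ x) x⁻¹ := by rw [h1]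
      _ = conjChar θ (x * x⁻¹) := (conjChar_mul θ x x⁻¹).symm
      _ = θ := by rw [mul_inv_cancel, conjChar_one]
  · intro h
    show conjChar (conjChar θ x) g = conjChar θ x
    have h1 : conjChar θ (x * g * x⁻¹) = θ := h
    calc conjChar (conjChar θ x) g = conjChar θ (x * g) := (conjChar_mul θ x g).symm
      _ = conjChar θ (x * g * x⁻¹ * x) := by congr 1; group
      _ = conjChar (conjChar θ (x * g * x⁻¹)) x := conjChar_mul θ (x * g * x⁻¹) x
      _ = conjChar θ x := by rw [h1]

/-- The orbit of `θ` under conjugation. -/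
def orb (θ : ↥Y → ℂ) : Set (↥Y → ℂ) := Set.range (conjChar θ)

lemma orb_conj (θ : ↥Y → ℂ) (x : X) : orb (conjChar θ x) = orb θ := by
  ext ψ
  constructor
  · rintro ⟨a, rfl⟩
    exact ⟨x * a, conjChar_mul θ x a⟩
  · rintro ⟨a, rfl⟩
    refine ⟨x⁻¹ * a, ?_⟩
    rw [← conjChar_mul, mul_inv_cancel_left]

lemma orb_nonempty (θ : ↥Y → ℂ) : (orb (Y := Y) θ).Nonempty := ⟨θ, 1, conjChar_one θ⟩

/-- A choice of element from a set of class functions. -/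
noncomputable def pickFn (S : Set (↥Y → ℂ)) : ↥Y → ℂ :=
  if h : S.Nonempty then h.choose else 0

lemma pickFn_mem {S : Set (↥Y → ℂ)} (h : S.Nonempty) : pickFn S ∈ S := by
  rw [pickFn, dif_pos h]; exact h.choose_spec

/-- A representative of the orbit of `θ`. -/
noncomputable def rchar (θ : ↥Y → ℂ) : ↥Y → ℂ := pickFn (orb θ)

lemma rchar_mem (θ : ↥Y → ℂ) : rchar θ ∈ orb θ := pickFn_mem (orb_nonempty θ)

lemma rchar_conj (θ : ↥Y → ℂ) (x : X) : rchar (conjChar θ x) = rchar θ := by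
  unfold rchar
  rw [orb_conj]

lemma exists_xsel (θ : ↥Y → ℂ) : ∃ a : X, conjChar (rchar θ) a = θ := by
  obtain ⟨b, hb⟩ := rchar_mem θ
  refine ⟨b⁻¹, ?_⟩
  rw [← hb, ← conjChar_mul, mul_inv_cancel, conjChar_one]

/-- An element conjugating the orbit representative to `θ`. -/
noncomputable def xsel (θ : ↥Y → ℂ) : X := (exists_xsel θ).choose

lemma xsel_spec (θ : ↥Y → ℂ) : conjChar (rchar θ) (xsel θ) = θ :=
  (exists_xsel θ).choose_spec

lemma mem_stab_r (χ : ↥Y → ℂ) (g : X) (hg : g ∈ charStab Y χ) :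
    xsel χ * g * (xsel χ)⁻¹ ∈ charStab Y (rchar χ) := by
  refine (mem_charStab_iff (rchar χ) (xsel χ) g).mp ?_
  rw [xsel_spec]
  exact hg

lemma mem_stab_of_conj {θ χ : ↥Y → ℂ} {x : X} (h : conjChar θ x = χ)
    {g : X} (hg : g ∈ charStab Y χ) : x * g * x⁻¹ ∈ charStab Y θ :=
  (mem_charStab_iff θ x g).mp (by rw [h]; exact hg)

lemma mem_stab_of_conj' {θ χ : ↥Y → ℂ} {x : X} (h : conjChar θ x = χ)
    {g : X} (hg : g ∈ charStab Y θ) : x⁻¹ * g * x ∈ charStab Y χ := by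
  rw [← h]
  refine (mem_charStab_iff θ x _).mpr ?_
  have hh : x * (x⁻¹ * g * x) * x⁻¹ = g := by group
  rw [hh]
  exact hg

/-- Conjugation as a `MulEquiv` between stabilisers. -/
noncomputable def conjStabEquiv {θ χ : ↥Y → ℂ} {x : X} (h : conjChar θ x = χ) :
    ↥(charStab Y χ) ≃* ↥(charStab Y θ) where
  toFun g := ⟨x * ↑g * x⁻¹, mem_stab_of_conj h g.2⟩
  invFun g := ⟨x⁻¹ * ↑g * x, mem_stab_of_conj' h g.2⟩
  left_inv g := by ext; simp; group
  right_inv g := by ext; simp; group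
  map_mul' a b := by ext; simp

/-- Conjugation invariance of an irreducible character of the stabiliser. -/
lemma class_key {r : ↥Y → ℂ} {ψ : ↥(charStab Y r) → ℂ}
    (hψ : IsIrrChar ↥(charStab Y r) ψ) (a b g : X)
    (hab : conjChar r a = conjChar r b)
    (h₁ : a * g * a⁻¹ ∈ charStab Y r) (h₂ : b * g * b⁻¹ ∈ charStab Y r) :
    ψ ⟨a * g * a⁻¹, h₁⟩ = ψ ⟨b * g * b⁻¹, h₂⟩ := by
  have hs : b * a⁻¹ ∈ charStab Y r := by
    show conjChar r (b * a⁻¹) = r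
    rw [conjChar_mul, hab.symm, ← conjChar_mul, mul_inv_cancel, conjChar_one]
  set u : ↥(charStab Y r) := ⟨b * a⁻¹, hs⟩ with hu
  have hval : (⟨a * g * a⁻¹, h₁⟩ : ↥(charStab Y r)) = u⁻¹ * ⟨b * g * b⁻¹, h₂⟩ * (u⁻¹)⁻¹ := by
    ext
    simp [u]
    group
  rw [hval]
  exact isIrrChar_conj_eq hψ u⁻¹ ⟨b * g * b⁻¹, h₂⟩

end Aux

/-- If an extension map exists for an `X`-stable subset `𝒴 ⊆ Irr(Y)`
with respect to `Y ⊴ X`, then an `X`-equivariant extension map exists,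
i.e. one satisfying `Λ(χ^x) = Λ(χ)^x` for all `χ ∈ 𝒴` and `x ∈ X`. -/
theorem equivariant_extension_map_exists {X : Type} [Group X] [Finite X]
    (Y : Subgroup X) [Y.Normal] (𝒴 : Set (↥Y → ℂ))
    (h_irr : ∀ χ ∈ 𝒴, IsIrrChar ↥Y χ)
    (h_stable : ∀ χ ∈ 𝒴, ∀ x : X, conjChar χ x ∈ 𝒴)
    (Λ₀ : ∀ χ : ↥Y → ℂ, ↥(charStab Y χ) → ℂ)
    (hΛ₀ : IsExtensionMapOn Y 𝒴 Λ₀) :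
    ∃ Λ : ∀ χ : ↥Y → ℂ, ↥(charStab Y χ) → ℂ,
      IsExtensionMapOn Y 𝒴 Λ ∧
      ∀ χ ∈ 𝒴, ∀ x : X, ∀ (g : X) (hg : g ∈ charStab Y (conjChar χ x))
        (hg' : x * g * x⁻¹ ∈ charStab Y χ),
        Λ (conjChar χ x) ⟨g, hg⟩ = Λ χ ⟨x * g * x⁻¹, hg'⟩ := by
  classical
  refine ⟨fun χ g => Λ₀ (rchar χ) ⟨xsel χ * ↑g * (xsel χ)⁻¹, mem_stab_r χ ↑g g.2⟩, ?_, ?_⟩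
  · intro χ hχ
    have hrY : rchar χ ∈ 𝒴 := by
      obtain ⟨a, ha⟩ := rchar_mem χ
      rw [← ha]
      exact h_stable χ hχ a
    obtain ⟨hirr, hres⟩ := hΛ₀ (rchar χ) hrY
    constructor
    · exact isIrrChar_comp (conjStabEquiv (xsel_spec χ)) hirr
    · intro y hy hy'
      have h1 := hres (xsel χ * y * (xsel χ)⁻¹)
        ((‹Y.Normal› : Y.Normal).conj_mem y hy (xsel χ)) (mem_stab_r χ y hy')
      show Λ₀ (rchar χ) ⟨xsel χ * y * (xsel χ)⁻¹, _⟩ = χ ⟨y, hy⟩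
      rw [h1]
      conv_rhs => rw [← xsel_spec χ]
      rfl
  · intro χ hχ x g hg hg'
    have hr : rchar (conjChar χ x) = rchar χ := rchar_conj χ x
    have hrY : rchar χ ∈ 𝒴 := by
      obtain ⟨a, ha⟩ := rchar_mem χ
      rw [← ha]
      exact h_stable χ hχ a
    have hirr := (hΛ₀ (rchar χ) hrY).1
    have e1 : ∀ (r r' : ↥Y → ℂ) (h : r' = r) (w : X) (p : w ∈ charStab Y r')
        (p' : w ∈ charStab Y r), Λ₀ r' ⟨w, p⟩ = Λ₀ r ⟨w, p'⟩ := by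
      rintro r r' rfl w p p'; rfl
    have e2 : ∀ (w w' : X) (hww : w = w') (p : w ∈ charStab Y (rchar χ))
        (p' : w' ∈ charStab Y (rchar χ)),
        Λ₀ (rchar χ) ⟨w, p⟩ = Λ₀ (rchar χ) ⟨w', p'⟩ := by
      rintro w w' rfl p p'; rfl
    set x₁ := xsel (conjChar χ x) with hx₁
    have p1 : x₁ * g * x₁⁻¹ ∈ charStab Y (rchar χ) := by
      rw [← hr]; exact mem_stab_r _ g hg
    have hab : conjChar (rchar χ) x₁ = conjChar (rchar χ) (xsel χ * x) := by
      have h1 : conjChar (rchar χ) x₁ = conjChar χ x := by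
        rw [← hr]; exact xsel_spec (conjChar χ x)
      rw [h1, conjChar_mul, xsel_spec χ]
    have p2 : (xsel χ * x) * g * (xsel χ * x)⁻¹ ∈ charStab Y (rchar χ) := by
      have hval : (xsel χ * x) * g * (xsel χ * x)⁻¹
          = xsel χ * (x * g * x⁻¹) * (xsel χ)⁻¹ := by group
      rw [hval]
      exact mem_stab_r χ _ hg'
    calc Λ₀ (rchar (conjChar χ x)) ⟨x₁ * g * x₁⁻¹, mem_stab_r _ g hg⟩
        = Λ₀ (rchar χ) ⟨x₁ * g * x₁⁻¹, p1⟩ :=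
          e1 (rchar χ) (rchar (conjChar χ x)) hr _ _ p1
      _ = Λ₀ (rchar χ) ⟨(xsel χ * x) * g * (xsel χ * x)⁻¹, p2⟩ :=
          class_key hirr x₁ (xsel χ * x) g hab p1 p2
      _ = Λ₀ (rchar χ) ⟨xsel χ * (x * g * x⁻¹) * (xsel χ)⁻¹, mem_stab_r χ _ hg'⟩ :=
          e2 _ _ (by group) p2 _
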